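/- Let a, b > 0 and f ∈ [0, 1]. Then the smallest of the four values φ₋(f), φ_left(f), φ₊(f), φ_right(f) is nonnegative, and the second-smallest of these four values (counted with multiplicity) is at most min(φ_left(f), φ_right(f)). Hence the nonuniform high-resolution TVD region {φ : smallest ≤ φ ≤ second-smallest} is contained in the nonuniform TVD region {φ : 0 ≤ φ ≤ min(φ_left(f), φ_right(f))}. -/
import Mathlib


/-- Nondimensional bounding slope `φ₋(f) = (2+a+b)f/(1+a)`. -/
noncomputable def phiMinus (a b f : ℝ) : ℝ := (2 + a + b) * f / (1 + a)

/-- Nondimensional bounding slope `φ_left(f) = (2+a+b)f`. -/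
noncomputable def phiLeft (a b f : ℝ) : ℝ := (2 + a + b) * f

/-- Nondimensional bounding slope `φ₊(f) = (2+a+b)(1−f)/(1+b)`. -/
noncomputable def phiPlus (a b f : ℝ) : ℝ := (2 + a + b) * (1 - f) / (1 + b)

/-- Nondimensional bounding slope `φ_right(f) = (2+a+b)(1−f)`. -/
noncomputable def phiRight (a b f : ℝ) : ℝ := (2 + a + b) * (1 - f)

/-- The smallest of four reals. -/
noncomputable def smallest4 (w x y z : ℝ) : ℝ := min (min w x) (min y z)

/-- The second-smallest of four reals (counted with multiplicity):
it equals the minimum over all pairs of the pairwise maximum. -/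
noncomputable def secondSmallest4 (w x y z : ℝ) : ℝ :=
  min (min (min (max w x) (max w y)) (min (max w z) (max x y)))
      (min (max x z) (max y z))

/-- For `a, b > 0` and `f ∈ [0,1]`, the smallest of the four bounding slopes
is nonnegative and the second-smallest is at most `min(φ_left, φ_right)`;
hence the nonuniform high-resolution TVD region is contained in the
nonuniform TVD region. -/
theorem nonuniform_high_resolution_tvd_subset_tvd
    (a b f : ℝ) (ha : 0 < a) (hb : 0 < b) (hf0 : 0 ≤ f) (hf1 : f ≤ 1) :
    0 ≤ smallest4 (phiMinus a b f) (phiLeft a b f)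
        (phiPlus a b f) (phiRight a b f) ∧
    secondSmallest4 (phiMinus a b f) (phiLeft a b f)
        (phiPlus a b f) (phiRight a b f) ≤
      min (phiLeft a b f) (phiRight a b f) ∧
    {φ : ℝ | smallest4 (phiMinus a b f) (phiLeft a b f)
        (phiPlus a b f) (phiRight a b f) ≤ φ ∧
      φ ≤ secondSmallest4 (phiMinus a b f) (phiLeft a b f)
        (phiPlus a b f) (phiRight a b f)} ⊆
      {φ : ℝ | 0 ≤ φ ∧ φ ≤ min (phiLeft a b f) (phiRight a b f)} := by
  have hc : 0 ≤ 2 + a + b := by linarith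
  have hw : 0 ≤ phiMinus a b f := by
    unfold phiMinus; positivity
  have hx : 0 ≤ phiLeft a b f := by unfold phiLeft; positivity
  have hy : 0 ≤ phiPlus a b f := by
    unfold phiPlus
    have : 0 ≤ 1 - f := by linarith
    positivity
  have hz : 0 ≤ phiRight a b f := by
    unfold phiRight
    have : 0 ≤ 1 - f := by linarith
    positivity
  have hwx : phiMinus a b f ≤ phiLeft a b f := by
    unfold phiMinus phiLeft
    rw [div_le_iff₀ (by linarith)]
    nlinarith [mul_nonneg hc hf0]
  have hyz : phiPlus a b f ≤ phiRight a b f := by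
    unfold phiPlus phiRight
    rw [div_le_iff₀ (by linarith)]
    nlinarith [mul_nonneg hc (by linarith : (0:ℝ) ≤ 1 - f)]
  have h1 : 0 ≤ smallest4 (phiMinus a b f) (phiLeft a b f) (phiPlus a b f) (phiRight a b f) := by
    unfold smallest4
    simp [le_min_iff, hw, hx, hy, hz]
  have h2 : secondSmallest4 (phiMinus a b f) (phiLeft a b f) (phiPlus a b f) (phiRight a b f) ≤
      min (phiLeft a b f) (phiRight a b f) := by
    unfold secondSmallest4
    have e1 : max (phiMinus a b f) (phiLeft a b f) = phiLeft a b f := max_eq_right hwx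
    have e2 : max (phiPlus a b f) (phiRight a b f) = phiRight a b f := max_eq_right hyz
    refine le_min ?_ ?_
    · exact le_trans (min_le_left _ _) (le_trans (min_le_left _ _)
        (le_trans (min_le_left _ _) (le_of_eq e1)))
    · exact le_trans (min_le_right _ _) (le_trans (min_le_right _ _) (le_of_eq e2))
  exact ⟨h1, h2, fun φ hφ => ⟨le_trans h1 hφ.1, le_trans hφ.2 h2⟩⟩
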